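/- arXiv:2601.11364 — 7 statements merged into one kernel-verified Lean document; each statement's English description precedes it below -/
import Mathlib

section
/- Let H be a Hilbert space and Λ a countable index set. Suppose (x_σ)_{σ∈Λ} is a Bessel sequence in H with Bessel bound B > 0, i.e., ∑_σ |⟨f, x_σ⟩|² ≤ B‖f‖² for all f ∈ H, and suppose (y_σ)_{σ∈Λ} satisfies ∑_σ ‖x_σ − y_σ‖² ≤ ε for some ε > 0. Then (y_σ) is a Bessel sequence with Bessel bound 2(B + ε): for all f ∈ H, ∑_σ |⟨f, y_σ⟩|² ≤ 2(B + ε)‖f‖². -/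
open scoped BigOperators

theorem stmt1 {H : Type*} [NormedAddCommGroup H] [InnerProductSpace ℂ H] [CompleteSpace H]
    {ι : Type*} [Countable ι] (x y : ι → H) (B ε : ℝ) (hB : 0 < B) (hε : 0 < ε)
    (hBessel : ∀ f : H, ∀ s : Finset ι,
      ∑ σ ∈ s, ‖(inner ℂ f (x σ) : ℂ)‖ ^ 2 ≤ B * ‖f‖ ^ 2)
    (hpert : ∀ s : Finset ι, ∑ σ ∈ s, ‖x σ - y σ‖ ^ 2 ≤ ε) :
    ∀ f : H, ∀ s : Finset ι,
      ∑ σ ∈ s, ‖(inner ℂ f (y σ) : ℂ)‖ ^ 2 ≤ 2 * (B + ε) * ‖f‖ ^ 2 := by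
  intro f s
  have key : ∀ σ ∈ s, ‖(inner ℂ f (y σ) : ℂ)‖ ^ 2 ≤
      2 * ‖(inner ℂ f (x σ) : ℂ)‖ ^ 2 + 2 * (‖f‖ ^ 2 * ‖x σ - y σ‖ ^ 2) := by
    intro σ _
    have h1 : (inner ℂ f (y σ) : ℂ) = inner ℂ f (x σ) - inner ℂ f (x σ - y σ) := by
      rw [inner_sub_right]; ring
    have h2 : ‖(inner ℂ f (y σ) : ℂ)‖ ≤ ‖(inner ℂ f (x σ) : ℂ)‖ + ‖(inner ℂ f (x σ - y σ) : ℂ)‖ := by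
      rw [h1]; exact norm_sub_le _ _
    have h3 : ‖(inner ℂ f (x σ - y σ) : ℂ)‖ ≤ ‖f‖ * ‖x σ - y σ‖ := norm_inner_le_norm _ _
    have h4 : ‖(inner ℂ f (y σ) : ℂ)‖ ≤ ‖(inner ℂ f (x σ) : ℂ)‖ + ‖f‖ * ‖x σ - y σ‖ := h2.trans (by linarith)
    have h5 : ‖(inner ℂ f (y σ) : ℂ)‖ ^ 2 ≤ (‖(inner ℂ f (x σ) : ℂ)‖ + ‖f‖ * ‖x σ - y σ‖) ^ 2 :=
      pow_le_pow_left₀ (norm_nonneg _) h4 2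
    nlinarith [sq_nonneg (‖(inner ℂ f (x σ) : ℂ)‖ - ‖f‖ * ‖x σ - y σ‖)]
  calc ∑ σ ∈ s, ‖(inner ℂ f (y σ) : ℂ)‖ ^ 2
      ≤ ∑ σ ∈ s, (2 * ‖(inner ℂ f (x σ) : ℂ)‖ ^ 2 + 2 * (‖f‖ ^ 2 * ‖x σ - y σ‖ ^ 2)) :=
        Finset.sum_le_sum key
    _ = 2 * (∑ σ ∈ s, ‖(inner ℂ f (x σ) : ℂ)‖ ^ 2) + 2 * ‖f‖ ^ 2 * (∑ σ ∈ s, ‖x σ - y σ‖ ^ 2) := by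
        rw [Finset.sum_add_distrib, Finset.mul_sum, Finset.mul_sum];
        congr 1 <;> apply Finset.sum_congr rfl <;> intros <;> ring
    _ ≤ 2 * (B * ‖f‖ ^ 2) + 2 * ‖f‖ ^ 2 * ε := by
        have := hBessel f s
        have := hpert s
        have hf : (0:ℝ) ≤ 2 * ‖f‖ ^ 2 := by positivity
        nlinarith
    _ = 2 * (B + ε) * ‖f‖ ^ 2 := by ring
end

section
/- Let H be a Hilbert space and Λ a countable index set. Suppose (x_σ)_{σ∈Λ} is a frame for H with lower frame bound A and upper frame bound B, and (y_σ)_{σ∈Λ} satisfies ∑_σ ‖x_σ − y_σ‖² ≤ ε with 0 < ε < A. Then (y_σ) is a frame for H with lower frame bound A(1 − √(ε/A))² and upper frame bound B(1 + √(ε/B))². -/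
open scoped BigOperators ENNReal

theorem stmt2 {H : Type*} [NormedAddCommGroup H] [InnerProductSpace ℂ H] [CompleteSpace H]
    {ι : Type*} [Countable ι] (x y : ι → H) (A B ε : ℝ) (hA : 0 < A) (hAB : A ≤ B)
    (hframe : ∀ f : H,
      Summable (fun σ => ‖(inner ℂ f (x σ) : ℂ)‖ ^ 2) ∧
      A * ‖f‖ ^ 2 ≤ ∑' σ, ‖(inner ℂ f (x σ) : ℂ)‖ ^ 2 ∧
      ∑' σ, ‖(inner ℂ f (x σ) : ℂ)‖ ^ 2 ≤ B * ‖f‖ ^ 2)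
    (hpertSummable : Summable (fun σ => ‖x σ - y σ‖ ^ 2))
    (hpert : ∑' σ, ‖x σ - y σ‖ ^ 2 ≤ ε) (hε : 0 < ε) (hεA : ε < A) :
    ∀ f : H,
      Summable (fun σ => ‖(inner ℂ f (y σ) : ℂ)‖ ^ 2) ∧
      A * (1 - Real.sqrt (ε / A)) ^ 2 * ‖f‖ ^ 2 ≤ ∑' σ, ‖(inner ℂ f (y σ) : ℂ)‖ ^ 2 ∧
      ∑' σ, ‖(inner ℂ f (y σ) : ℂ)‖ ^ 2 ≤ B * (1 + Real.sqrt (ε / B)) ^ 2 * ‖f‖ ^ 2 := by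
  have hB : 0 < B := lt_of_lt_of_le hA hAB
  have hrpow : ∀ a : ℝ, a ^ ((2:ℝ≥0∞).toReal) = a ^ 2 := by
    intro a
    rw [show ((2:ℝ≥0∞)).toReal = ((2:ℕ):ℝ) by norm_num, Real.rpow_natCast a 2]
  intro f
  obtain ⟨hxs, hxl, hxu⟩ := hframe f
  -- the perturbation sequence
  set w : ι → ℂ := fun σ => inner ℂ f (x σ - y σ) with hw
  have hwle : ∀ σ, ‖w σ‖ ^ 2 ≤ ‖f‖ ^ 2 * ‖x σ - y σ‖ ^ 2 := by
    intro σ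
    have := norm_inner_le_norm (𝕜 := ℂ) f (x σ - y σ)
    calc ‖w σ‖ ^ 2 ≤ (‖f‖ * ‖x σ - y σ‖) ^ 2 := by
          apply pow_le_pow_left₀ (norm_nonneg _) this
      _ = ‖f‖ ^ 2 * ‖x σ - y σ‖ ^ 2 := by ring
  have hws : Summable fun σ => ‖w σ‖ ^ 2 := by
    apply Summable.of_nonneg_of_le (fun σ => by positivity) hwle
    exact hpertSummable.mul_left _
  have hwsum : ∑' σ, ‖w σ‖ ^ 2 ≤ ‖f‖ ^ 2 * ε := by
    calc ∑' σ, ‖w σ‖ ^ 2 ≤ ∑' σ, ‖f‖ ^ 2 * ‖x σ - y σ‖ ^ 2 :=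
          Summable.tsum_le_tsum hwle hws (hpertSummable.mul_left _)
      _ = ‖f‖ ^ 2 * ∑' σ, ‖x σ - y σ‖ ^ 2 := tsum_mul_left
      _ ≤ ‖f‖ ^ 2 * ε := by nlinarith [sq_nonneg ‖f‖]
  -- lp elements
  have hUm : Memℓp (fun σ => (inner ℂ f (x σ) : ℂ)) 2 := by
    apply memℓp_gen; simpa only [hrpow] using hxs
  have hWm : Memℓp w 2 := by
    apply memℓp_gen; simpa only [hrpow] using hws
  have hVm : Memℓp (fun σ => (inner ℂ f (y σ) : ℂ)) 2 := by
    have : (fun σ => (inner ℂ f (y σ) : ℂ)) = (fun σ => (inner ℂ f (x σ) : ℂ)) - w := by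
      funext σ; simp [hw, inner_sub_right]
    rw [this]; exact hUm.sub hWm
  have hys : Summable fun σ => ‖(inner ℂ f (y σ) : ℂ)‖ ^ 2 := by
    have := hVm.summable (by norm_num : (0:ℝ) < (2:ℝ≥0∞).toReal)
    simpa only [hrpow] using this
  -- lp elements and their norms
  set U : lp (fun _ : ι => ℂ) 2 := ⟨_, hUm⟩ with hU
  set W' : lp (fun _ : ι => ℂ) 2 := ⟨_, hWm⟩ with hW'
  set V : lp (fun _ : ι => ℂ) 2 := ⟨_, hVm⟩ with hV
  have hVUW : V = U - W' := by
    apply lp.ext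
    rw [lp.coeFn_sub]
    funext σ
    simp [hU, hW', hV, hw, inner_sub_right]
  have hnorm : ∀ (Z : lp (fun _ : ι => ℂ) 2), ‖Z‖ ^ 2 = ∑' σ, ‖Z σ‖ ^ 2 := by
    intro Z
    have := lp.norm_rpow_eq_tsum (by norm_num : (0:ℝ) < (2:ℝ≥0∞).toReal) Z
    simpa only [hrpow] using this
  have hUsq : ‖U‖ ^ 2 = ∑' σ, ‖(inner ℂ f (x σ) : ℂ)‖ ^ 2 := hnorm U
  have hWsq : ‖W'‖ ^ 2 = ∑' σ, ‖w σ‖ ^ 2 := hnorm W'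
  have hVsq : ‖V‖ ^ 2 = ∑' σ, ‖(inner ℂ f (y σ) : ℂ)‖ ^ 2 := hnorm V
  have hf0 : (0:ℝ) ≤ ‖f‖ := norm_nonneg f
  have key : ∀ a b : ℝ, 0 ≤ a → 0 ≤ b → a ^ 2 ≤ b ^ 2 → a ≤ b := by
    intro a b ha hb h; nlinarith
  -- scalar bounds on norms
  have hUub : ‖U‖ ≤ Real.sqrt B * ‖f‖ := by
    apply key _ _ (norm_nonneg U) (by positivity)
    rw [mul_pow, Real.sq_sqrt hB.le, hUsq]; exact hxu
  have hUlb : Real.sqrt A * ‖f‖ ≤ ‖U‖ := by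
    apply key _ _ (by positivity) (norm_nonneg U)
    rw [mul_pow, Real.sq_sqrt hA.le, hUsq]; exact hxl
  have hWub : ‖W'‖ ≤ Real.sqrt ε * ‖f‖ := by
    apply key _ _ (norm_nonneg W') (by positivity)
    rw [mul_pow, Real.sq_sqrt hε.le, hWsq]
    calc ∑' σ, ‖w σ‖ ^ 2 ≤ ‖f‖ ^ 2 * ε := hwsum
      _ = ε * ‖f‖ ^ 2 := by ring
  -- triangle inequalities
  have htri_up : ‖V‖ ≤ ‖U‖ + ‖W'‖ := by rw [hVUW]; exact norm_sub_le U W'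
  have htri_lo : ‖U‖ - ‖W'‖ ≤ ‖V‖ := by
    rw [hVUW]; exact le_trans (by linarith [norm_sub_norm_le U W']) (le_refl _)
  have hεB : Real.sqrt ε ≤ Real.sqrt B := Real.sqrt_le_sqrt (by linarith)
  have hεAs : Real.sqrt ε ≤ Real.sqrt A := Real.sqrt_le_sqrt hεA.le
  have hsA : 0 < Real.sqrt A := Real.sqrt_pos.2 hA
  have hsB : 0 < Real.sqrt B := Real.sqrt_pos.2 hB
  -- algebraic identities for the frame bounds
  have hBid : B * (1 + Real.sqrt (ε / B)) ^ 2 = (Real.sqrt B + Real.sqrt ε) ^ 2 := by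
    rw [Real.sqrt_div hε.le]
    rw [show B * (1 + Real.sqrt ε / Real.sqrt B) ^ 2
        = (Real.sqrt B * (1 + Real.sqrt ε / Real.sqrt B)) ^ 2 by
      rw [mul_pow, Real.sq_sqrt hB.le]]
    rw [mul_add, mul_one, mul_div_cancel₀ _ hsB.ne']
  have hAid : A * (1 - Real.sqrt (ε / A)) ^ 2 = (Real.sqrt A - Real.sqrt ε) ^ 2 := by
    rw [Real.sqrt_div hε.le]
    rw [show A * (1 - Real.sqrt ε / Real.sqrt A) ^ 2
        = (Real.sqrt A * (1 - Real.sqrt ε / Real.sqrt A)) ^ 2 by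
      rw [mul_pow, Real.sq_sqrt hA.le]]
    rw [mul_sub, mul_one, mul_div_cancel₀ _ hsA.ne']
  refine ⟨hys, ?_, ?_⟩
  · -- lower bound
    rw [hAid, ← hVsq]
    have h1 : (Real.sqrt A - Real.sqrt ε) * ‖f‖ ≤ ‖V‖ := by
      calc (Real.sqrt A - Real.sqrt ε) * ‖f‖
          = Real.sqrt A * ‖f‖ - Real.sqrt ε * ‖f‖ := by ring
        _ ≤ ‖U‖ - ‖W'‖ := by
            apply sub_le_sub hUlb hWub
        _ ≤ ‖V‖ := htri_lo
    have h0 : 0 ≤ (Real.sqrt A - Real.sqrt ε) * ‖f‖ := by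
      apply mul_nonneg (by linarith) hf0
    calc (Real.sqrt A - Real.sqrt ε) ^ 2 * ‖f‖ ^ 2
        = ((Real.sqrt A - Real.sqrt ε) * ‖f‖) ^ 2 := by ring
      _ ≤ ‖V‖ ^ 2 := by apply pow_le_pow_left₀ h0 h1
  · -- upper bound
    rw [hBid, ← hVsq]
    have h1 : ‖V‖ ≤ (Real.sqrt B + Real.sqrt ε) * ‖f‖ := by
      calc ‖V‖ ≤ ‖U‖ + ‖W'‖ := htri_up
        _ ≤ Real.sqrt B * ‖f‖ + Real.sqrt ε * ‖f‖ := add_le_add hUub hWub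
        _ = (Real.sqrt B + Real.sqrt ε) * ‖f‖ := by ring
    calc ‖V‖ ^ 2 ≤ ((Real.sqrt B + Real.sqrt ε) * ‖f‖) ^ 2 := by
          apply pow_le_pow_left₀ (norm_nonneg V) h1
      _ = (Real.sqrt B + Real.sqrt ε) ^ 2 * ‖f‖ ^ 2 := by ring
end

section
/- Let g(t) = e^{−t²/2} for t ∈ ℝ, and for α, β, β_n ∈ ℝ and m, n ∈ ℤ define φ_{m,n}(t) = e^{iβmt} g(t − αn) and g_{m,n}(t) = e^{iβ_n mt} g(t − αn). Then the L²(ℝ) norm satisfies ‖φ_{m,n} − g_{m,n}‖² = 2√π (1 − cos((β_n − β)·m·αn) · e^{−(β_n−β)² m² / 4}). -/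
open Complex MeasureTheory Real

lemma pt (x1 x2 r : ℝ) :
    ‖Complex.exp (Complex.I * x1) * Complex.exp (-(r : ℂ) ^ 2 / 2)
      - Complex.exp (Complex.I * x2) * Complex.exp (-(r : ℂ) ^ 2 / 2)‖ ^ 2
    = (2 - 2 * Real.cos (x1 - x2)) * Real.exp (-r ^ 2) := by
  rw [← sub_mul, norm_mul, mul_pow]
  have h1 : ‖Complex.exp (-(r : ℂ) ^ 2 / 2)‖ ^ 2 = Real.exp (-r ^ 2) := by
    have : (-(r : ℂ) ^ 2 / 2) = ((-r ^ 2 / 2 : ℝ) : ℂ) := by push_cast; ring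
    rw [this, Complex.norm_exp, Complex.ofReal_re, sq, ← Real.exp_add]
    ring_nf
  have h2 : ‖Complex.exp (Complex.I * x1) - Complex.exp (Complex.I * x2)‖ ^ 2
      = 2 - 2 * Real.cos (x1 - x2) := by
    rw [mul_comm Complex.I (x1 : ℂ), mul_comm Complex.I (x2 : ℂ),
      Complex.exp_mul_I, Complex.exp_mul_I, Complex.sq_norm]
    simp only [← Complex.ofReal_cos, ← Complex.ofReal_sin]
    have : (Real.cos x1 : ℂ) + (Real.sin x1 : ℂ) * Complex.I -
        ((Real.cos x2 : ℂ) + (Real.sin x2 : ℂ) * Complex.I)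
        = ((Real.cos x1 - Real.cos x2 : ℝ) : ℂ)
          + ((Real.sin x1 - Real.sin x2 : ℝ) : ℂ) * Complex.I := by
      push_cast; ring
    rw [this, Complex.normSq_add_mul_I, Real.cos_sub]
    nlinarith [Real.sin_sq_add_cos_sq x1, Real.sin_sq_add_cos_sq x2]
  rw [h1, h2]

lemma finLem (s u v : ℝ) :
    (2 * ((s : ℂ) * 1) - 2 * ((s : ℂ) * Complex.exp ((u : ℂ) + (v : ℂ) * Complex.I))).re
    = 2 * s - 2 * (s * (Real.exp u * Real.cos v)) := by
  simp [Complex.exp_re, Complex.sub_re, Complex.mul_re, Complex.mul_im]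

lemma reLem (R s : ℝ) :
    (2 * Complex.exp ((R : ℂ)) - 2 * Complex.exp ((R : ℂ) + (s : ℂ) * Complex.I)).re
    = 2 * Real.exp R - 2 * (Real.exp R * Real.cos s) := by
  simp [Complex.exp_re, Complex.exp_im, Complex.sub_re, Complex.mul_re, Complex.mul_im]

theorem stmt4 (α β βn : ℝ) (m n : ℤ) :
    ∫ t : ℝ,
      ‖(Complex.exp (Complex.I * (β * m * t)) * Complex.exp (-((t : ℂ) - α * n) ^ 2 / 2)
          - Complex.exp (Complex.I * (βn * m * t)) * Complex.exp (-((t : ℂ) - α * n) ^ 2 / 2))‖ ^ 2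
      = 2 * Real.sqrt Real.pi *
        (1 - Real.cos ((βn - β) * m * (α * n)) *
          Real.exp (-((βn - β) ^ 2 * m ^ 2) / 4)) := by
  set a : ℝ := α * n with ha
  set c : ℝ := (βn - β) * m with hc
  have hpt : ∀ t : ℝ,
      ‖(Complex.exp (Complex.I * (β * m * t)) * Complex.exp (-((t : ℂ) - α * n) ^ 2 / 2)
          - Complex.exp (Complex.I * (βn * m * t)) * Complex.exp (-((t : ℂ) - α * n) ^ 2 / 2))‖ ^ 2
      = (2 - 2 * Real.cos (c * t)) * Real.exp (-(t - a) ^ 2) := by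
    intro t
    have e1 : (Complex.I * ((β : ℂ) * m * t)) = Complex.I * ((β * m * t : ℝ) : ℂ) := by
      push_cast; ring
    have e2 : (Complex.I * ((βn : ℂ) * m * t)) = Complex.I * ((βn * m * t : ℝ) : ℂ) := by
      push_cast; ring
    have e3 : ((t : ℂ) - (α : ℂ) * n) = ((t - a : ℝ) : ℂ) := by rw [ha]; push_cast; ring
    rw [e1, e2, e3, pt]
    have : β * ↑m * t - βn * ↑m * t = -(c * t) := by rw [hc]; push_cast; ring
    rw [this, Real.cos_neg]
  simp_rw [hpt]
  have hre : ∀ t : ℝ, (2 - 2 * Real.cos (c * t)) * Real.exp (-(t - a) ^ 2)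
      = (2 * Complex.exp (-1 * (t:ℂ) ^ 2 + ((2 * a : ℝ) : ℂ) * t + ((-(a ^ 2) : ℝ) : ℂ))
        - 2 * Complex.exp (-1 * (t:ℂ) ^ 2 + (((2 * a : ℝ) : ℂ) + Complex.I * c) * t
            + ((-(a ^ 2) : ℝ) : ℂ))).re := by
    intro t
    have q1 : (-1 * (t : ℂ) ^ 2 + ((2 * a : ℝ) : ℂ) * t + ((-(a ^ 2) : ℝ) : ℂ))
        = ((-(t - a) ^ 2 : ℝ) : ℂ) := by push_cast; ring
    have q2 : (-1 * (t : ℂ) ^ 2 + (((2 * a : ℝ) : ℂ) + Complex.I * c) * t + ((-(a ^ 2) : ℝ) : ℂ))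
        = ((-(t - a) ^ 2 : ℝ) : ℂ) + ((c * t : ℝ) : ℂ) * Complex.I := by push_cast; ring
    rw [q1, q2, reLem]
    ring
  simp_rw [hre]
  have hb : (-1 : ℂ).re < 0 := by norm_num
  have int1 : Integrable (fun t : ℝ =>
      Complex.exp (-1 * (t:ℂ) ^ 2 + ((2 * a : ℝ) : ℂ) * t + ((-(a ^ 2) : ℝ) : ℂ))) :=
    integrable_cexp_quadratic' hb _ _
  have int2 : Integrable (fun t : ℝ =>
      Complex.exp (-1 * (t:ℂ) ^ 2 + (((2 * a : ℝ) : ℂ) + Complex.I * c) * t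
        + ((-(a ^ 2) : ℝ) : ℂ))) :=
    integrable_cexp_quadratic' hb _ _
  have intF : Integrable (fun t : ℝ =>
      2 * Complex.exp (-1 * (t:ℂ) ^ 2 + ((2 * a : ℝ) : ℂ) * t + ((-(a ^ 2) : ℝ) : ℂ))
      - 2 * Complex.exp (-1 * (t:ℂ) ^ 2 + (((2 * a : ℝ) : ℂ) + Complex.I * c) * t
          + ((-(a ^ 2) : ℝ) : ℂ))) := (int1.const_mul 2).sub (int2.const_mul 2)
  simp_rw [← RCLike.re_to_complex]
  rw [integral_re intF]
  simp_rw [RCLike.re_to_complex]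
  rw [integral_sub (int1.const_mul 2) (int2.const_mul 2), integral_const_mul, integral_const_mul,
    integral_cexp_quadratic hb, integral_cexp_quadratic hb]
  have hpow : ((Real.pi : ℂ) / -(-1)) ^ (1 / 2 : ℂ) = (Real.sqrt Real.pi : ℂ) := by
    rw [neg_neg, div_one,
      show ((1:ℂ)/2) = ((1/2 : ℝ) : ℂ) by norm_num, ← Complex.ofReal_cpow Real.pi_nonneg,
      Real.sqrt_eq_rpow]
  rw [hpow]
  have e1 : ((-(a ^ 2) : ℝ) : ℂ) - ((2 * a : ℝ) : ℂ) ^ 2 / (4 * (-1)) = 0 := by push_cast; ring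
  have e2 : ((-(a ^ 2) : ℝ) : ℂ) - (((2 * a : ℝ) : ℂ) + Complex.I * c) ^ 2 / (4 * (-1))
      = ((-(c ^ 2) / 4 : ℝ) : ℂ) + ((c * a : ℝ) : ℂ) * Complex.I := by
    have : Complex.I ^ 2 = -1 := Complex.I_sq
    push_cast
    field_simp
    ring_nf
    rw [Complex.I_sq]
    ring
  rw [e1, e2, Complex.exp_zero]
  rw [finLem (Real.sqrt Real.pi) (-(c ^ 2) / 4) (c * a)]
  have harg : (βn - β) * (m : ℝ) * (α * n) = c * a := by rw [ha, hc]
  have hexp : -((βn - β) ^ 2 * (m : ℝ) ^ 2) / 4 = -(c ^ 2) / 4 := by rw [hc]; ring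
  rw [harg, hexp]
  ring
end

section
/- Let g(t) = e^{−t²/2} on ℝ, α > 0, β ∈ ℝ, and (β_n)_{n∈ℤ} a sequence of reals which is not identically β, i.e., β_{n₀} ≠ β for some n₀ ∈ ℤ. With φ_{m,n}(t) = e^{iβmt} g(t−αn) and g_{m,n}(t) = e^{iβ_n mt} g(t−αn), the double sum ∑_{m,n∈ℤ} ‖φ_{m,n} − g_{m,n}‖²_{L²(ℝ)} diverges (equals +∞). -/
open MeasureTheory Filter Real Complex Topology

lemma gauss_integrable (a : ℝ) : Integrable (fun t : ℝ => Real.exp (-(t - a) ^ 2)) := by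
  have := Integrable.comp_sub_right (μ := volume)
    (f := fun x : ℝ => Real.exp (-1 * x ^ 2)) (integrable_exp_neg_mul_sq one_pos) a
  simpa using this

lemma gauss_integral (a : ℝ) : ∫ t : ℝ, Real.exp (-(t - a) ^ 2) = Real.sqrt π := by
  have h := integral_sub_right_eq_self (μ := volume) (fun t : ℝ => Real.exp (-t ^ 2)) a
  rw [h]
  have := integral_gaussian 1
  simpa using this

lemma cos_gauss_tendsto (a c : ℝ) (hc : c ≠ 0) :
    Tendsto (fun m : ℤ => ∫ t : ℝ, Real.cos (c * m * t) * Real.exp (-(t - a) ^ 2))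
      cofinite (𝓝 0) := by
  set fc : ℝ → ℂ := fun t => (Real.exp (-(t - a) ^ 2) : ℂ) with hfc
  have RL := Real.tendsto_integral_exp_smul_cocompact fc
  have hφ : Tendsto (fun m : ℤ => -(c * m) / (2 * π)) cofinite (cocompact ℝ) := by
    rw [← Metric.cobounded_eq_cocompact, ← comap_norm_atTop, tendsto_comap_iff]
    have habs : Tendsto (fun m : ℤ => |(m : ℝ)|) cofinite atTop := by
      rw [Int.cofinite_eq, tendsto_sup]
      exact ⟨tendsto_abs_atBot_atTop.comp (tendsto_intCast_atBot_iff.mpr tendsto_id),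
        tendsto_abs_atTop_atTop.comp tendsto_intCast_atTop_atTop⟩
    have h2 : Tendsto (fun m : ℤ => |c| / (2 * π) * |(m : ℝ)|) cofinite atTop :=
      habs.const_mul_atTop (div_pos (abs_pos.mpr hc) (by positivity))
    refine h2.congr fun m => ?_
    simp only [Function.comp, Real.norm_eq_abs, abs_div, abs_neg, abs_mul, abs_two,
      abs_of_pos pi_pos]
    norm_num
    ring
  have H := RL.comp hφ
  have hkey : ∀ m : ℤ,
      (∫ v : ℝ, Real.fourierChar (-(v * (-(c * m) / (2 * π)))) • fc v)
        = ∫ v : ℝ, Complex.exp ((c * m * v : ℝ) * Complex.I) * fc v := by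
    intro m
    congr 1
    funext v
    have hr : 2 * π * (-(v * (-(c * (m : ℝ)) / (2 * π)))) = c * (m : ℝ) * v := by
      field_simp
    rw [Circle.smul_def, Real.fourierChar_apply, hr, smul_eq_mul]
  have hre : ∀ m : ℤ, (∫ t : ℝ, Real.cos (c * m * t) * Real.exp (-(t - a) ^ 2))
      = ((∫ v : ℝ, Real.fourierChar (-(v * (-(c * m) / (2 * π)))) • fc v) : ℂ).re := by
    intro m
    rw [hkey m]
    have hint : Integrable (fun v : ℝ => Complex.exp ((c * m * v : ℝ) * Complex.I) * fc v) := by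
      refine Integrable.bdd_mul (c := 1) ((gauss_integrable a).ofReal) ?_ (Eventually.of_forall fun v => ?_)
      · exact (Complex.continuous_exp.comp (by continuity)).aestronglyMeasurable
      · rw [Complex.norm_exp]
        simp
    have hcc := ContinuousLinearMap.integral_comp_comm Complex.reCLM hint
    simp only [Complex.reCLM_apply] at hcc
    rw [← hcc]
    congr 1
    funext v
    simp only [hfc, Complex.mul_re, Complex.exp_ofReal_mul_I_re, Complex.exp_ofReal_mul_I_im,
      Complex.ofReal_re, Complex.ofReal_im, mul_zero, sub_zero]
  have h0 : Tendsto (fun m : ℤ =>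
      ((∫ v : ℝ, Real.fourierChar (-(v * (-(c * m) / (2 * π)))) • fc v) : ℂ).re)
      cofinite (𝓝 0) := by
    have := (Complex.continuous_re.tendsto 0).comp H
    simpa [Function.comp_def] using this
  exact Tendsto.congr (fun m => (hre m).symm) h0

lemma normsq_exp_sub (x y : ℝ) :
    ‖Complex.exp (Complex.I * x) - Complex.exp (Complex.I * y)‖ ^ 2
      = 2 - 2 * Real.cos (x - y) := by
  rw [mul_comm Complex.I (x:ℂ), mul_comm Complex.I (y:ℂ)]
  rw [Complex.sq_norm, Complex.normSq_apply]
  simp only [Complex.exp_ofReal_mul_I_re, Complex.exp_ofReal_mul_I_im, Complex.sub_re,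
    Complex.sub_im, Real.cos_sub]
  nlinarith [Real.sin_sq_add_cos_sq x, Real.sin_sq_add_cos_sq y]

lemma gauss_normsq (t a : ℝ) :
    ‖Complex.exp (-((t : ℂ) - a) ^ 2 / 2)‖ ^ 2 = Real.exp (-(t - a) ^ 2) := by
  have h : (-((t : ℂ) - a) ^ 2 / 2) = ((-(t - a) ^ 2 / 2 : ℝ) : ℂ) := by push_cast; ring
  rw [h, Complex.norm_exp, Complex.ofReal_re, ← Real.exp_nat_mul]
  norm_num
  ring

lemma term_eq (βr β' a : ℝ) (m : ℤ) :
    (∫ t : ℝ, ‖(Complex.exp (Complex.I * (βr * m * t)) * Complex.exp (-((t : ℂ) - a) ^ 2 / 2)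
        - Complex.exp (Complex.I * (β' * m * t)) * Complex.exp (-((t : ℂ) - a) ^ 2 / 2))‖ ^ 2)
      = 2 * Real.sqrt π
          - 2 * ∫ t : ℝ, Real.cos ((βr - β') * m * t) * Real.exp (-(t - a) ^ 2) := by
  have hpoint : (fun t : ℝ => ‖(Complex.exp (Complex.I * (βr * m * t))
        * Complex.exp (-((t : ℂ) - a) ^ 2 / 2)
        - Complex.exp (Complex.I * (β' * m * t)) * Complex.exp (-((t : ℂ) - a) ^ 2 / 2))‖ ^ 2)
      = fun t : ℝ => 2 * Real.exp (-(t - a) ^ 2)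
          - 2 * (Real.cos ((βr - β') * m * t) * Real.exp (-(t - a) ^ 2)) := by
    funext t
    have e1 : ((βr : ℂ) * (m : ℂ) * (t : ℂ)) = ((βr * m * t : ℝ) : ℂ) := by push_cast; ring
    have e2 : ((β' : ℂ) * (m : ℂ) * (t : ℂ)) = ((β' * m * t : ℝ) : ℂ) := by push_cast; ring
    rw [e1, e2, ← sub_mul, norm_mul, mul_pow, normsq_exp_sub, gauss_normsq,
      show βr * m * t - β' * m * t = (βr - β') * m * t by ring]
    ring
  rw [hpoint]
  have hI1 := gauss_integrable a
  have hI2 : Integrable (fun t : ℝ => Real.cos ((βr - β') * m * t) * Real.exp (-(t - a) ^ 2)) :=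
    hI1.bdd_mul (c := 1) (Real.continuous_cos.comp (by continuity)).aestronglyMeasurable
      (Eventually.of_forall fun t => by rw [Real.norm_eq_abs]; exact Real.abs_cos_le_one _)
  rw [integral_sub (hI1.const_mul 2) (hI2.const_mul 2), integral_const_mul, integral_const_mul,
    gauss_integral]

theorem stmt5 (α β : ℝ) (hα : 0 < α) (βseq : ℤ → ℝ) (n₀ : ℤ) (hn₀ : βseq n₀ ≠ β) :
    ¬ Summable (fun p : ℤ × ℤ =>
      ∫ t : ℝ,
        ‖(Complex.exp (Complex.I * (β * p.1 * t)) * Complex.exp (-((t : ℂ) - α * p.2) ^ 2 / 2)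
            - Complex.exp (Complex.I * (βseq p.2 * p.1 * t)) *
                Complex.exp (-((t : ℂ) - α * p.2) ^ 2 / 2))‖ ^ 2) := by
  intro hs
  have hc : β - βseq n₀ ≠ 0 := sub_ne_zero.mpr (Ne.symm hn₀)
  have hinj : Function.Injective (fun m : ℤ => ((m, n₀) : ℤ × ℤ)) :=
    fun x y h => (Prod.ext_iff.1 h).1
  have hs' := hs.comp_injective hinj
  have h0 := hs'.tendsto_cofinite_zero
  have hcast : ∀ t : ℝ, ((α : ℂ) * (n₀ : ℂ)) = (((α * n₀ : ℝ)) : ℂ) := by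
    intro t; push_cast; ring
  have hFeq : ∀ m : ℤ, ((fun p : ℤ × ℤ =>
      ∫ t : ℝ,
        ‖(Complex.exp (Complex.I * (β * p.1 * t)) * Complex.exp (-((t : ℂ) - α * p.2) ^ 2 / 2)
            - Complex.exp (Complex.I * (βseq p.2 * p.1 * t)) *
                Complex.exp (-((t : ℂ) - α * p.2) ^ 2 / 2))‖ ^ 2) ∘ fun m : ℤ => (m, n₀)) m
      = 2 * Real.sqrt π - 2 * ∫ t : ℝ,
          Real.cos ((β - βseq n₀) * m * t) * Real.exp (-(t - α * n₀) ^ 2) := by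
    intro m
    simp only [Function.comp]
    rw [show ((α : ℂ) * (n₀ : ℂ)) = (((α * n₀ : ℝ)) : ℂ) by push_cast; ring]
    exact term_eq β (βseq n₀) (α * n₀) m
  rw [show ((fun p : ℤ × ℤ =>
      ∫ t : ℝ,
        ‖(Complex.exp (Complex.I * (β * p.1 * t)) * Complex.exp (-((t : ℂ) - α * p.2) ^ 2 / 2)
            - Complex.exp (Complex.I * (βseq p.2 * p.1 * t)) *
                Complex.exp (-((t : ℂ) - α * p.2) ^ 2 / 2))‖ ^ 2) ∘ fun m : ℤ => (m, n₀))
      = fun m : ℤ => 2 * Real.sqrt π - 2 * ∫ t : ℝ,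
          Real.cos ((β - βseq n₀) * m * t) * Real.exp (-(t - α * n₀) ^ 2) from funext hFeq] at h0
  have hG := cos_gauss_tendsto (α * n₀) (β - βseq n₀) hc
  have hlim : Tendsto (fun m : ℤ => 2 * Real.sqrt π - 2 * ∫ t : ℝ,
      Real.cos ((β - βseq n₀) * m * t) * Real.exp (-(t - α * n₀) ^ 2)) cofinite
      (𝓝 (2 * Real.sqrt π - 2 * 0)) :=
    tendsto_const_nhds.sub (hG.const_mul 2)
  have := tendsto_nhds_unique h0 hlim
  have hπ : 0 < Real.sqrt π := Real.sqrt_pos.mpr pi_pos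
  rw [mul_zero, sub_zero] at this
  linarith
end

section
/- Let κ ∈ ℕ₀^d and ℓ ≥ 1. Then ℓ! · ∑ ∏_{|γ|>0} 1/(c_γ!) ≤ 2^{|κ| + dℓ − d}, where the sum runs over all families (c_γ)_{γ∈ℕ₀^d, |γ|>0} of nonnegative integers with ∑_{|γ|>0} c_γ = ℓ and ∑_{|γ|>0} γ c_γ = κ. -/
open scoped BigOperators Classical

namespace Stmt7Aux

open Finset

lemma list_sum_range (n : ℕ) (f : ℕ → ℕ) :
    ((List.range n).map f).sum = ∑ i ∈ Finset.range n, f i := by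
  induction n with
  | zero => simp
  | succ n ih =>
      rw [List.range_succ, Finset.sum_range_succ, List.map_append, List.sum_append, ih]; simp

lemma sum_two_pow_lt (m : ℕ) : ∑ i ∈ range m, 2 ^ i < 2 ^ m := by
  induction m with
  | zero => simp
  | succ m ih => rw [sum_range_succ, pow_succ, mul_two]; omega

lemma adt_len : ∀ (k n : ℕ), (List.Nat.antidiagonalTuple (k+1) n).length ≤ 2 ^ (n + k) := by
  intro k
  induction k with
  | zero =>
      intro n
      rw [List.Nat.antidiagonalTuple_one]
      simpa using Nat.one_le_two_pow
  | succ k ih =>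
      intro n
      have hrec : List.Nat.antidiagonalTuple (k+2) n =
          (List.Nat.antidiagonal n).flatMap fun ni =>
            (List.Nat.antidiagonalTuple (k+1) ni.2).map fun x => (Fin.cons ni.1 x : Fin (k+2) → ℕ) := rfl
      rw [hrec, List.length_flatMap]
      have h1 : (List.map (List.length ∘ fun ni =>
            (List.Nat.antidiagonalTuple (k+1) ni.2).map fun x => (Fin.cons ni.1 x : Fin (k+2) → ℕ))
            (List.Nat.antidiagonal n)).sum
          ≤ (List.map (fun ni : ℕ × ℕ => 2 ^ (ni.2 + k)) (List.Nat.antidiagonal n)).sum := by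
        apply List.sum_le_sum
        intro i _
        simpa using ih i.2
      refine h1.trans ?_
      have h2 : List.Nat.antidiagonal n = (List.range (n+1)).map fun i => (i, n - i) := rfl
      rw [h2, List.map_map]
      have h3 : ((List.range (n+1)).map ((fun ni : ℕ × ℕ => 2 ^ (ni.2 + k)) ∘ fun i => (i, n - i))).sum
          = ∑ i ∈ range (n+1), 2 ^ (n - i + k) := list_sum_range _ _
      rw [h3]
      have h4 : ∑ i ∈ range (n+1), 2 ^ (n - i + k) = ∑ i ∈ range (n+1), 2 ^ (i + k) := by
        rw [← Finset.sum_range_reflect]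
        apply Finset.sum_congr rfl
        intro i hi
        simp only [Finset.mem_range] at hi
        congr 2
        omega
      rw [h4]
      calc ∑ i ∈ range (n+1), 2 ^ (i + k) = ∑ i ∈ range (n+1), 2 ^ i * 2 ^ k := by
            simp [pow_add]
        _ = (∑ i ∈ range (n+1), 2 ^ i) * 2 ^ k := by rw [Finset.sum_mul]
        _ ≤ 2 ^ (n+1) * 2 ^ k := by
            have := (sum_two_pow_lt (n+1)).le
            exact Nat.mul_le_mul_right _ this
        _ = 2 ^ (n + (k+1)) := by ring

lemma adt_card (k n : ℕ) : (Finset.Nat.antidiagonalTuple (k+1) n).card ≤ 2 ^ (n + k) :=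
  adt_len k n


variable {d : ℕ}

lemma image_eq_support {l : ℕ} (h : Fin l → Fin d → ℕ) (c : (Fin d → ℕ) →₀ ℕ)
    (hcnt : ∀ γ, (Finset.univ.filter (fun i => h i = γ)).card = c γ) :
    Finset.univ.image h = c.support := by
  ext γ
  rw [Finset.mem_image, Finsupp.mem_support_iff, ← hcnt γ]
  constructor
  · rintro ⟨i, -, rfl⟩
    have : i ∈ Finset.univ.filter (fun i' => h i' = h i) := by simp
    exact (Finset.card_pos.mpr ⟨i, this⟩).ne'
  · intro hne
    obtain ⟨i, hi⟩ := Finset.card_pos.mp (Nat.pos_of_ne_zero hne)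
    exact ⟨i, Finset.mem_univ i, (Finset.mem_filter.mp hi).2⟩

lemma col_sums {l : ℕ} (h : Fin l → Fin d → ℕ) (c : (Fin d → ℕ) →₀ ℕ) (κ : Fin d → ℕ)
    (hκ : c.sum (fun γ k => k • γ) = κ)
    (hcnt : ∀ γ, (Finset.univ.filter (fun i => h i = γ)).card = c γ) :
    ∀ j, ∑ i, h i j = κ j := by
  have himg := image_eq_support h c hcnt
  have hsum : ∑ i, h i = c.sum (fun γ k => k • γ) := by
    rw [Finsupp.sum, ← himg,
      ← Finset.sum_fiberwise_of_maps_to (fun i _ => Finset.mem_image_of_mem h (Finset.mem_univ i))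
        (fun i => h i)]
    refine Finset.sum_congr rfl fun γ hγ => ?_
    have : ∑ i ∈ Finset.univ.filter (fun i => h i = γ), h i
        = ∑ _i ∈ Finset.univ.filter (fun i => h i = γ), γ :=
      Finset.sum_congr rfl fun i hi => (Finset.mem_filter.mp hi).2
    rw [this, Finset.sum_const, hcnt γ]
  intro j
  have := congrFun (hsum.trans hκ) j
  rw [Finset.sum_apply] at this
  simpa using this

variable {d : ℕ}

/-- fiber of the "count" map inside an ambient finset `T` -/
noncomputable def fiber (l : ℕ) (c : (Fin d → ℕ) →₀ ℕ)
    (T : Finset (Fin l → Fin d → ℕ)) : Finset (Fin l → Fin d → ℕ) :=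
  T.filter (fun h => ∀ γ, (Finset.univ.filter (fun i => h i = γ)).card = c γ)

lemma mem_fiber {l : ℕ} {c : (Fin d → ℕ) →₀ ℕ} {T : Finset (Fin l → Fin d → ℕ)}
    {h : Fin l → Fin d → ℕ} :
    h ∈ fiber l c T ↔ h ∈ T ∧ ∀ γ, (Finset.univ.filter (fun i => h i = γ)).card = c γ :=
  Finset.mem_filter

lemma exists_base (l : ℕ) (c : (Fin d → ℕ) →₀ ℕ) (hc : ∑ γ ∈ c.support, c γ = l) :
    ∃ g : Fin l → Fin d → ℕ, ∀ γ, (Finset.univ.filter (fun i => g i = γ)).card = c γ := by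
  have hcard : Fintype.card (Σ γ : c.support, Fin (c γ)) = l := by
    rw [Fintype.card_sigma]
    simp only [Fintype.card_fin]
    rw [Finset.sum_coe_sort]
    exact hc
  let e := Fintype.equivFinOfCardEq hcard
  refine ⟨fun i => ((e.symm i).1 : Fin d → ℕ), fun γ => ?_⟩
  have h1 : (Finset.univ.filter (fun i => ((e.symm i).1 : Fin d → ℕ) = γ)).card
      = Fintype.card {i : Fin l // ((e.symm i).1 : Fin d → ℕ) = γ} :=
    (Fintype.card_subtype _).symm
  rw [h1]
  have h2 : {i : Fin l // ((e.symm i).1 : Fin d → ℕ) = γ}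
      ≃ {p : Σ γ' : c.support, Fin (c γ') // (p.1 : Fin d → ℕ) = γ} :=
    Equiv.subtypeEquiv e.symm (fun i => Iff.rfl)
  rw [Fintype.card_congr h2]
  by_cases hγ : γ ∈ c.support
  · have h3 : {p : Σ γ' : c.support, Fin (c γ') // (p.1 : Fin d → ℕ) = γ} ≃ Fin (c γ) :=
      { toFun := fun p => Fin.cast (by rw [p.2]) p.1.2
        invFun := fun q => ⟨⟨⟨γ, hγ⟩, q⟩, rfl⟩
        left_inv := by rintro ⟨⟨⟨γ', hγ'⟩, q⟩, rfl⟩; rfl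
        right_inv := fun q => rfl }
    rw [Fintype.card_congr h3, Fintype.card_fin]
  · have h0 : c γ = 0 := Finsupp.notMem_support_iff.mp hγ
    rw [h0]
    have : IsEmpty {p : Σ γ' : c.support, Fin (c γ') // (p.1 : Fin d → ℕ) = γ} :=
      ⟨fun p => hγ (p.2 ▸ p.1.1.2)⟩
    exact Fintype.card_eq_zero

lemma cnt_comp_perm {l : ℕ} (g : Fin l → Fin d → ℕ) (σ : Equiv.Perm (Fin l)) (γ : Fin d → ℕ) :
    (Finset.univ.filter (fun i => (g ∘ σ) i = γ)).card
      = (Finset.univ.filter (fun i => g i = γ)).card := by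
  rw [← Fintype.card_subtype, ← Fintype.card_subtype]
  exact Fintype.card_congr (Equiv.subtypeEquiv σ (fun i => Iff.rfl))

lemma key (l : ℕ) (c : (Fin d → ℕ) →₀ ℕ) (hc : ∑ γ ∈ c.support, c γ = l)
    (T : Finset (Fin l → Fin d → ℕ))
    (hT : ∀ h : Fin l → Fin d → ℕ,
      (∀ γ, (Finset.univ.filter (fun i => h i = γ)).card = c γ) → h ∈ T) :
    Nat.multinomial c.support c ≤ (fiber l c T).card := by
  obtain ⟨g, hg⟩ := exists_base l c hc
  set n₀ := ∏ γ ∈ c.support, (c γ).factorial with hn₀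
  have hn₀pos : 0 < n₀ := Finset.prod_pos fun γ _ => Nat.factorial_pos _
  -- image of g is the support of c
  have himg : Finset.univ.image g = c.support := by
    ext γ
    rw [Finset.mem_image, Finsupp.mem_support_iff, ← hg γ]
    constructor
    · rintro ⟨i, -, rfl⟩
      have : i ∈ Finset.univ.filter (fun i' => g i' = g i) := by simp
      exact (Finset.card_pos.mpr ⟨i, this⟩).ne'
    · intro hne
      obtain ⟨i, hi⟩ := Finset.card_pos.mp (Nat.pos_of_ne_zero hne)
      exact ⟨i, Finset.mem_univ i, (Finset.mem_filter.mp hi).2⟩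
  -- stabilizer cardinality
  have hstab : Fintype.card {σ : Equiv.Perm (Fin l) // g ∘ ⇑σ = g} = n₀ := by
    rw [DomMulAct.stabilizer_card' g, himg]
    refine Finset.prod_congr rfl fun γ _ => ?_
    rw [Fintype.card_subtype, hg γ]
  -- the main counting
  have hmaps : ∀ σ : Equiv.Perm (Fin l), σ ∈ (Finset.univ : Finset (Equiv.Perm (Fin l))) →
      g ∘ ⇑σ ∈ fiber l c T := by
    intro σ _
    have hcnt : ∀ γ, (Finset.univ.filter (fun i => (g ∘ ⇑σ) i = γ)).card = c γ := by
      intro γ; rw [cnt_comp_perm g σ γ, hg γ]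
    exact mem_fiber.mpr ⟨hT _ hcnt, hcnt⟩
  have hbound : ∀ b ∈ fiber l c T,
      ((Finset.univ : Finset (Equiv.Perm (Fin l))).filter (fun σ : Equiv.Perm (Fin l) => g ∘ ⇑σ = b)).card ≤ n₀ := by
    intro b _
    by_cases hb : ∃ τ : Equiv.Perm (Fin l), g ∘ ⇑τ = b
    · obtain ⟨τ, hτ⟩ := hb
      have h1 : ((Finset.univ : Finset (Equiv.Perm (Fin l))).filter (fun σ : Equiv.Perm (Fin l) => g ∘ ⇑σ = b)).card
          = Fintype.card {σ : Equiv.Perm (Fin l) // g ∘ ⇑σ = b} :=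
        (Fintype.card_subtype _).symm
      rw [h1]
      have h2 : {σ : Equiv.Perm (Fin l) // g ∘ ⇑σ = b}
          ≃ {σ : Equiv.Perm (Fin l) // g ∘ ⇑σ = g} := by
        refine Equiv.subtypeEquiv (Equiv.mulRight τ⁻¹) (fun σ => ?_)
        simp only [Equiv.coe_mulRight]
        constructor
        · intro h
          funext x
          show g ((σ * τ⁻¹) x) = g x
          calc g (σ (τ⁻¹ x)) = b (τ⁻¹ x) := congrFun h (τ⁻¹ x)
            _ = g (τ (τ⁻¹ x)) := (congrFun hτ (τ⁻¹ x)).symm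
            _ = g x := by rw [Equiv.Perm.inv_def, Equiv.apply_symm_apply]
        · intro h
          funext x
          calc g (σ x) = g (σ (τ⁻¹ (τ x))) := by rw [Equiv.Perm.inv_def, Equiv.symm_apply_apply]
            _ = g ((σ * τ⁻¹) (τ x)) := rfl
            _ = g (τ x) := congrFun h (τ x)
            _ = b x := congrFun hτ x
      rw [Fintype.card_congr h2, hstab]
    · have : ((Finset.univ : Finset (Equiv.Perm (Fin l))).filter (fun σ : Equiv.Perm (Fin l) => g ∘ ⇑σ = b)) = ∅ := by
        refine Finset.filter_eq_empty_iff.mpr fun σ _ => ?_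
        exact fun h => hb ⟨σ, h⟩
      rw [this]
      simp
  have hcard := Finset.card_le_mul_card_image_of_maps_to hmaps n₀ hbound
  have hperm : (Finset.univ : Finset (Equiv.Perm (Fin l))).card = l.factorial := by
    rw [Finset.card_univ, Fintype.card_perm, Fintype.card_fin]
  have hspec : n₀ * Nat.multinomial c.support c = l.factorial := by
    rw [hn₀, Nat.multinomial_spec, hc]
  have hfin : n₀ * Nat.multinomial c.support c ≤ n₀ * (fiber l c T).card := by
    rw [hspec, ← hperm]
    exact hcard
  exact Nat.le_of_mul_le_mul_left hfin hn₀pos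

end Stmt7Aux

open scoped BigOperators

theorem stmt7 (d l : ℕ) (hl : 1 ≤ l) (κ : Fin d → ℕ) :
    (l.factorial : ℝ) *
      ∑' c : {c : (Fin d → ℕ) →₀ ℕ //
          (∀ γ ∈ c.support, γ ≠ 0) ∧
          c.sum (fun _ k => k) = l ∧
          c.sum (fun γ k => k • γ) = κ},
        ∏ γ ∈ (c.1).support, (1 : ℝ) / (Nat.factorial (c.1 γ))
      ≤ 2 ^ ((∑ j, κ j) + d * l - d) := by
  classical
  obtain ⟨m, rfl⟩ : ∃ m, l = m + 1 := ⟨l - 1, by omega⟩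
  set E := (∑ j, κ j) + d * (m + 1) - d with hE
  -- the ambient finset of tuples
  set T : Finset (Fin (m+1) → Fin d → ℕ) :=
    (Fintype.piFinset fun j : Fin d => Finset.Nat.antidiagonalTuple (m+1) (κ j)).image
      (fun gg i j => gg j i) with hTdef
  have hswap_inj : Function.Injective
      (fun (gg : Fin d → Fin (m+1) → ℕ) (i : Fin (m+1)) (j : Fin d) => gg j i) := by
    intro a b hab
    funext j i
    have := congrFun (congrFun hab i) j
    simpa using this
  have hTcard : T.card ≤ 2 ^ E := by
    rw [hTdef, Finset.card_image_of_injective _ hswap_inj, Fintype.card_piFinset]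
    calc ∏ j, (Finset.Nat.antidiagonalTuple (m+1) (κ j)).card
        ≤ ∏ j, 2 ^ (κ j + m) := Finset.prod_le_prod' fun j _ => Stmt7Aux.adt_card m (κ j)
      _ = 2 ^ (∑ j, (κ j + m)) := Finset.prod_pow_eq_pow_sum _ _ _
      _ = 2 ^ E := by
          congr 1
          rw [Finset.sum_add_distrib, Finset.sum_const, Finset.card_univ, Fintype.card_fin, hE]
          simp only [smul_eq_mul]
          rw [Nat.mul_succ]
          omega
  have hmemT : ∀ (c : (Fin d → ℕ) →₀ ℕ), c.sum (fun γ k => k • γ) = κ →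
      ∀ h : Fin (m+1) → Fin d → ℕ,
      (∀ γ, (Finset.univ.filter (fun i => h i = γ)).card = c γ) → h ∈ T := by
    intro c hκ h hcnt
    have hcol := Stmt7Aux.col_sums h c κ hκ hcnt
    rw [hTdef, Finset.mem_image]
    refine ⟨fun j i => h i j, Fintype.mem_piFinset.mpr fun j =>
      Finset.Nat.mem_antidiagonalTuple.mpr (hcol j), rfl⟩
  rw [← tsum_mul_left]
  apply tsum_le_of_sum_le' (by positivity)
  intro s
  have hterm : ∀ c ∈ s, ((m+1).factorial : ℝ) * ∏ γ ∈ (c.1).support,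
      (1 : ℝ) / (Nat.factorial (c.1 γ)) = (Nat.multinomial c.1.support c.1 : ℝ) := by
    intro c _
    have hc : ∑ γ ∈ c.1.support, c.1 γ = m + 1 := by
      simpa [Finsupp.sum] using c.2.2.1
    have hspec := Nat.multinomial_spec c.1.support c.1
    rw [hc] at hspec
    have hne : (∏ γ ∈ c.1.support, (Nat.factorial (c.1 γ) : ℝ)) ≠ 0 :=
      ne_of_gt (Finset.prod_pos fun γ _ => by positivity)
    have h1 : ∏ γ ∈ c.1.support, (1 : ℝ) / (Nat.factorial (c.1 γ))
        = (∏ γ ∈ c.1.support, (Nat.factorial (c.1 γ) : ℝ))⁻¹ := by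
      rw [← Finset.prod_inv_distrib]
      simp [one_div]
    rw [h1, ← hspec]
    push_cast
    field_simp
  rw [Finset.sum_congr rfl hterm]
  have hnat : ∑ c ∈ s, Nat.multinomial c.1.support c.1 ≤ T.card := by
    have hd : ∀ c ∈ s, ∀ c' ∈ s, c ≠ c' →
        Disjoint (Stmt7Aux.fiber (m+1) c.1 T) (Stmt7Aux.fiber (m+1) c'.1 T) := by
      intro c _ c' _ hne
      rw [Finset.disjoint_left]
      intro h hh hh'
      refine hne (Subtype.ext (Finsupp.ext fun γ => ?_))
      rw [← (Stmt7Aux.mem_fiber.mp hh).2 γ, (Stmt7Aux.mem_fiber.mp hh').2 γ]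
    calc ∑ c ∈ s, Nat.multinomial c.1.support c.1
        ≤ ∑ c ∈ s, (Stmt7Aux.fiber (m+1) c.1 T).card := by
          refine Finset.sum_le_sum fun c _ => ?_
          refine Stmt7Aux.key (m+1) c.1 ?_ T (hmemT c.1 c.2.2.2)
          simpa [Finsupp.sum] using c.2.2.1
      _ = (s.biUnion fun c => Stmt7Aux.fiber (m+1) c.1 T).card := (Finset.card_biUnion hd).symm
      _ ≤ T.card := Finset.card_le_card (Finset.biUnion_subset.mpr
          fun c _ => Finset.filter_subset _ _)
  calc ∑ c ∈ s, (Nat.multinomial c.1.support c.1 : ℝ)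
      = ((∑ c ∈ s, Nat.multinomial c.1.support c.1 : ℕ) : ℝ) := (Nat.cast_sum _ _).symm
    _ ≤ ((2 ^ E : ℕ) : ℝ) := by exact_mod_cast hnat.trans hTcard
    _ = 2 ^ E := by norm_cast
end

section
/- Let ω: [0,∞) → [0,∞) be continuous, increasing, subadditive (ω(t₁+t₂) ≤ ω(t₁)+ω(t₂)), with φ(t) := ω(e^t) convex, and let φ*(s) = sup_{t≥0}(st − φ(t)) be its Young conjugate. Then for every λ > 0 and all multi-indices γ, σ ∈ ℕ₀^d, (e^{λφ*(|γ|/λ)}/γ!) · (e^{λφ*(|σ|/λ)}/σ!) ≤ e^{λφ*(|γ+σ|/λ)}/(γ+σ)!. -/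
open scoped BigOperators

lemma aux_binom_fact (u v : ℝ) (hu : 0 ≤ u) (hv : 0 ≤ v) (m n : ℕ) :
    u ^ m * v ^ n * ((m + n).factorial : ℝ) ≤
      (u + v) ^ (m + n) * (((m).factorial : ℝ) * ((n).factorial : ℝ)) := by
  have hchoose : (((m + n).choose m : ℕ) : ℝ) * (u ^ m * v ^ n) ≤ (u + v) ^ (m + n) := by
    rw [add_pow]
    have hmem : m ∈ Finset.range (m + n + 1) := by
      simp [Nat.lt_succ_iff]
    have := Finset.single_le_sum
      (f := fun k => u ^ k * v ^ (m + n - k) * ((m + n).choose k : ℝ))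
      (fun k _ => by positivity) hmem
    simpa [Nat.add_sub_cancel_left, mul_comm, mul_left_comm, mul_assoc] using this
  have hfact : ((m + n).factorial : ℝ) =
      ((m + n).choose m : ℝ) * ((m).factorial : ℝ) * ((n).factorial : ℝ) := by
    have := Nat.choose_mul_factorial_mul_factorial (Nat.le_add_right m n)
    rw [Nat.add_sub_cancel_left] at this
    exact_mod_cast this.symm
  have h1 : (0:ℝ) ≤ ((m).factorial : ℝ) * ((n).factorial : ℝ) := by positivity
  calc u ^ m * v ^ n * ((m + n).factorial : ℝ)
      = (((m + n).choose m : ℕ) : ℝ) * (u ^ m * v ^ n) *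
          (((m).factorial : ℝ) * ((n).factorial : ℝ)) := by rw [hfact]; ring
    _ ≤ (u + v) ^ (m + n) * (((m).factorial : ℝ) * ((n).factorial : ℝ)) :=
        mul_le_mul_of_nonneg_right hchoose h1

theorem stmt8 (d : ℕ) (ω : ℝ → ℝ)
    (hcont : ContinuousOn ω (Set.Ici 0)) (hmono : MonotoneOn ω (Set.Ici 0))
    (hnonneg : ∀ t : ℝ, 0 ≤ t → 0 ≤ ω t)
    (hsub : ∀ s t : ℝ, 0 ≤ s → 0 ≤ t → ω (s + t) ≤ ω s + ω t)
    (hconv : ConvexOn ℝ Set.univ (fun t => ω (Real.exp t)))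
    (φs : ℝ → ℝ)
    (hφs : ∀ s : ℝ, 0 ≤ s →
      IsLUB ((fun t => s * t - ω (Real.exp t)) '' Set.Ici 0) (φs s)) :
    ∀ l : ℝ, 0 < l → ∀ γ σ : Fin d → ℕ,
      (Real.exp (l * φs ((∑ j, γ j : ℕ) / l)) / ((∏ j, (γ j).factorial : ℕ) : ℝ)) *
        (Real.exp (l * φs ((∑ j, σ j : ℕ) / l)) / ((∏ j, (σ j).factorial : ℕ) : ℝ))
      ≤ Real.exp (l * φs ((∑ j, (γ j + σ j) : ℕ) / l)) /
          ((∏ j, (γ j + σ j).factorial : ℕ) : ℝ) := by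
  intro l hl γ σ
  set ng : ℕ := ∑ j, γ j with hng
  set ns : ℕ := ∑ j, σ j with hns
  set nc : ℕ := ∑ j, (γ j + σ j) with hnc
  have hncadd : nc = ng + ns := by
    simp [hng, hns, hnc, Finset.sum_add_distrib]
  set Pg : ℝ := ((∏ j, (γ j).factorial : ℕ) : ℝ) with hPg
  set Ps : ℝ := ((∏ j, (σ j).factorial : ℕ) : ℝ) with hPs
  set Pc : ℝ := ((∏ j, (γ j + σ j).factorial : ℕ) : ℝ) with hPc
  have hPgpos : 0 < Pg := by
    rw [hPg]; exact_mod_cast Finset.prod_pos fun j _ => Nat.factorial_pos _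
  have hPspos : 0 < Ps := by
    rw [hPs]; exact_mod_cast Finset.prod_pos fun j _ => Nat.factorial_pos _
  have hPcpos : 0 < Pc := by
    rw [hPc]; exact_mod_cast Finset.prod_pos fun j _ => Nat.factorial_pos _
  set K : ℝ := Real.log (Pg * Ps / Pc) with hK
  -- step lemma: to bound l * φs (N/l) above, bound all elements
  have step : ∀ (N : ℕ) (M : ℝ),
      (∀ t : ℝ, 0 ≤ t → (N : ℝ) * t - l * ω (Real.exp t) ≤ M) → l * φs ((N : ℝ) / l) ≤ M := by
    intro N M hM
    have hNl : (0:ℝ) ≤ (N : ℝ) / l := by positivity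
    have hub : φs ((N : ℝ) / l) ≤ M / l := by
      apply (hφs _ hNl).2
      rintro x ⟨t, ht, rfl⟩
      have h1 := hM t ht
      rw [le_div_iff₀ hl]
      have heq : ((N : ℝ) / l * t - ω (Real.exp t)) * l = (N : ℝ) * t - l * ω (Real.exp t) := by
        field_simp
      rw [heq]; exact h1
    calc l * φs ((N : ℝ) / l) ≤ l * (M / l) := by
          exact mul_le_mul_of_nonneg_left hub hl.le
      _ = M := by field_simp
  -- key pointwise inequality
  have key : ∀ t : ℝ, 0 ≤ t → ∀ s : ℝ, 0 ≤ s →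
      ((ng : ℝ) * t - l * ω (Real.exp t)) + ((ns : ℝ) * s - l * ω (Real.exp s)) ≤
        l * φs ((nc : ℝ) / l) + K := by
    intro t ht s hs
    set u : ℝ := Real.exp t with hu
    set v : ℝ := Real.exp s with hv
    have hupos : 0 < u := Real.exp_pos t
    have hvpos : 0 < v := Real.exp_pos s
    have hu1 : 1 ≤ u := Real.one_le_exp ht
    have huv1 : 1 ≤ u + v := le_add_of_le_of_nonneg hu1 hvpos.le
    have huvpos : 0 < u + v := lt_of_lt_of_le one_pos huv1
    have hlog : 0 ≤ Real.log (u + v) := Real.log_nonneg huv1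
    -- element of the sup set at r = log (u+v)
    have hmem : (nc : ℝ) / l * Real.log (u + v) - ω (Real.exp (Real.log (u + v))) ≤
        φs ((nc : ℝ) / l) := by
      apply (hφs _ (by positivity)).1
      exact ⟨Real.log (u + v), hlog, rfl⟩
    rw [Real.exp_log huvpos] at hmem
    have hphi : (nc : ℝ) * Real.log (u + v) - l * ω (u + v) ≤ l * φs ((nc : ℝ) / l) := by
      have := mul_le_mul_of_nonneg_left hmem hl.le
      calc (nc : ℝ) * Real.log (u + v) - l * ω (u + v)
          = l * ((nc : ℝ) / l * Real.log (u + v) - ω (u + v)) := by field_simp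
        _ ≤ l * φs ((nc : ℝ) / l) := this
    have hsubadd : ω (u + v) ≤ ω u + ω v := hsub u v hupos.le hvpos.le
    have hwsub : l * ω u + l * ω v ≥ l * ω (u + v) := by nlinarith
    -- binomial / factorial part
    have hbin : (ng : ℝ) * t + (ns : ℝ) * s ≤ (nc : ℝ) * Real.log (u + v) + K := by
      rw [← Real.exp_le_exp]
      have hL : Real.exp ((ng : ℝ) * t + (ns : ℝ) * s) = u ^ ng * v ^ ns := by
        rw [Real.exp_add, hu, hv, ← Real.exp_nat_mul, ← Real.exp_nat_mul]
      have hRpos : (0:ℝ) < Pg * Ps / Pc := by positivity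
      have hR : Real.exp ((nc : ℝ) * Real.log (u + v) + K) =
          (u + v) ^ nc * (Pg * Ps / Pc) := by
        rw [Real.exp_add, Real.exp_nat_mul, Real.exp_log huvpos, hK, Real.exp_log hRpos]
      rw [hL, hR,
        show (u + v) ^ nc * (Pg * Ps / Pc) = (u + v) ^ nc * (Pg * Ps) / Pc by ring,
        le_div_iff₀ hPcpos]
      -- product inequality
      have hprod : ∏ j, (u ^ γ j * v ^ σ j * ((γ j + σ j).factorial : ℝ)) ≤
          ∏ j, ((u + v) ^ (γ j + σ j) * (((γ j).factorial : ℝ) * ((σ j).factorial : ℝ))) := by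
        apply Finset.prod_le_prod
        · intro j _; positivity
        · intro j _; exact aux_binom_fact u v hupos.le hvpos.le _ _
      calc u ^ ng * v ^ ns * Pc
          = ∏ j, (u ^ γ j * v ^ σ j * ((γ j + σ j).factorial : ℝ)) := by
            rw [hPc, hng, hns]
            push_cast
            rw [Finset.prod_mul_distrib, Finset.prod_mul_distrib,
              Finset.prod_pow_eq_pow_sum, Finset.prod_pow_eq_pow_sum]
        _ ≤ ∏ j, ((u + v) ^ (γ j + σ j) * (((γ j).factorial : ℝ) * ((σ j).factorial : ℝ))) :=
            hprod
        _ = (u + v) ^ nc * (Pg * Ps) := by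
            rw [hPg, hPs, hnc]
            push_cast
            rw [Finset.prod_mul_distrib, Finset.prod_mul_distrib,
              Finset.prod_pow_eq_pow_sum]
    linarith
  -- combine
  have hmain : l * φs ((ng : ℝ) / l) + l * φs ((ns : ℝ) / l) ≤ l * φs ((nc : ℝ) / l) + K := by
    have h1 : l * φs ((ng : ℝ) / l) ≤ l * φs ((nc : ℝ) / l) + K - l * φs ((ns : ℝ) / l) := by
      apply step
      intro t ht
      have h2 : l * φs ((ns : ℝ) / l) ≤
          l * φs ((nc : ℝ) / l) + K - ((ng : ℝ) * t - l * ω (Real.exp t)) := by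
        apply step
        intro s hs
        have := key t ht s hs
        linarith
      linarith
    linarith
  -- finish
  have hexp : Real.exp (l * φs ((ng : ℝ) / l) + l * φs ((ns : ℝ) / l)) ≤
      Real.exp (l * φs ((nc : ℝ) / l)) * (Pg * Ps / Pc) := by
    have hRpos : (0:ℝ) < Pg * Ps / Pc := by positivity
    calc Real.exp (l * φs ((ng : ℝ) / l) + l * φs ((ns : ℝ) / l))
        ≤ Real.exp (l * φs ((nc : ℝ) / l) + K) := Real.exp_le_exp.mpr hmain
      _ = Real.exp (l * φs ((nc : ℝ) / l)) * (Pg * Ps / Pc) := by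
          rw [Real.exp_add, hK, Real.exp_log hRpos]
  rw [div_mul_div_comm, ← Real.exp_add, div_le_div_iff₀ (by positivity) hPcpos]
  calc Real.exp (l * φs ((ng : ℝ) / l) + l * φs ((ns : ℝ) / l)) * Pc
      ≤ Real.exp (l * φs ((nc : ℝ) / l)) * (Pg * Ps / Pc) * Pc :=
        mul_le_mul_of_nonneg_right hexp hPcpos.le
    _ = Real.exp (l * φs ((nc : ℝ) / l)) * (Pg * Ps) := by field_simp
end

section
/- Let H be a Hilbert space, Λ a countable index set, and (x_σ)_{σ∈Λ}, (y_σ)_{σ∈Λ} two families in H. Let w: Λ → [1, ∞) be a weight function and u ∈ H. Suppose: (a) ∑_{σ∈Λ} w(σ)² |⟨u, x_σ⟩|² ≤ K² for some K > 0, (b) for every λ ≥ 1 there is ε_λ > 0 with ∑_{σ∈Λ} w(σ)^λ ‖x_σ − y_σ‖² ≤ ε_λ. Then for every subset Γ ⊆ Λ and every λ ≥ 1: |∑_{σ∈Γ} w(σ)^λ|⟨u,y_σ⟩|² − ∑_{σ∈Γ} w(σ)^λ|⟨u,x_σ⟩|²| can be bounded so that ∑_{σ∈Γ} w(σ)^λ|⟨u,x_σ⟩|²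 ≤ ∑_{σ∈Γ} w(σ)^λ|⟨u,y_σ⟩|² + 2K‖u‖√(ε_{2λ+2}); in particular, finiteness of ∑_{σ∈Γ} w(σ)^λ|⟨u,y_σ⟩|² for all λ implies finiteness of ∑_{σ∈Γ} w(σ)^λ|⟨u,x_σ⟩|² for all λ. -/
open scoped BigOperators

theorem stmt17 {H : Type*} [NormedAddCommGroup H] [InnerProductSpace ℂ H] [CompleteSpace H]
    {ι : Type*} [Countable ι] (x y : ι → H) (w : ι → ℝ) (hw : ∀ σ, 1 ≤ w σ)
    (u : H) (K : ℝ) (hK : 0 < K)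
    (ha : ∀ s : Finset ι, ∑ σ ∈ s, w σ ^ 2 * ‖(inner ℂ u (x σ) : ℂ)‖ ^ 2 ≤ K ^ 2)
    (ε : ℝ → ℝ)
    (hb : ∀ l : ℝ, 1 ≤ l → 0 < ε l ∧
      ∀ s : Finset ι, ∑ σ ∈ s, w σ ^ l * ‖x σ - y σ‖ ^ 2 ≤ ε l) :
    ∀ Γ : Set ι, ∀ l : ℝ, 1 ≤ l → ∀ s : Finset ι, ↑s ⊆ Γ →
      ∑ σ ∈ s, w σ ^ l * ‖(inner ℂ u (x σ) : ℂ)‖ ^ 2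
        ≤ (∑ σ ∈ s, w σ ^ l * ‖(inner ℂ u (y σ) : ℂ)‖ ^ 2)
            + 2 * K * ‖u‖ * Real.sqrt (ε (2 * l + 2)) := by
  intro Γ l hl s _
  have hwpos : ∀ σ, (0:ℝ) < w σ := fun σ => lt_of_lt_of_le one_pos (hw σ)
  set a : ι → ℝ := fun σ => ‖(inner ℂ u (x σ) : ℂ)‖ with ha_def
  set b : ι → ℝ := fun σ => ‖(inner ℂ u (y σ) : ℂ)‖ with hb_def
  set d : ι → ℝ := fun σ => ‖(inner ℂ u (x σ - y σ) : ℂ)‖ with hd_def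
  have hab : ∀ σ, a σ ≤ b σ + d σ := by
    intro σ
    have h1 : (inner ℂ u (x σ) : ℂ) = inner ℂ u (y σ) + inner ℂ u (x σ - y σ) := by
      rw [inner_sub_right]; ring
    calc a σ = ‖(inner ℂ u (y σ) + inner ℂ u (x σ - y σ) : ℂ)‖ := by rw [ha_def]; rw [← h1]
    _ ≤ b σ + d σ := norm_add_le _ _
  -- pointwise key inequality
  have key : ∀ σ, w σ ^ l * a σ ^ 2 ≤ w σ ^ l * b σ ^ 2 + 2 * (w σ ^ l * (a σ * d σ)) := by
    intro σ
    have ha0 : 0 ≤ a σ := norm_nonneg _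
    have hb0 : 0 ≤ b σ := norm_nonneg _
    have hd0 : 0 ≤ d σ := norm_nonneg _
    have hwl : 0 ≤ w σ ^ l := (Real.rpow_pos_of_pos (hwpos σ) l).le
    have h2 : a σ ^ 2 ≤ b σ ^ 2 + 2 * (a σ * d σ) := by
      rcases le_or_gt (a σ) (b σ) with h | h
      · nlinarith
      · nlinarith [hab σ]
    nlinarith [mul_le_mul_of_nonneg_left h2 hwl]
  have hsum : ∑ σ ∈ s, w σ ^ l * a σ ^ 2
      ≤ (∑ σ ∈ s, w σ ^ l * b σ ^ 2) + 2 * ∑ σ ∈ s, w σ ^ l * (a σ * d σ) := by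
    rw [Finset.mul_sum, ← Finset.sum_add_distrib]
    exact Finset.sum_le_sum fun σ _ => key σ
  -- bound the cross term T
  set T := ∑ σ ∈ s, w σ ^ l * (a σ * d σ) with hT_def
  have hsplit : ∀ σ, w σ ^ l * (a σ * d σ) = (w σ * a σ) * (w σ ^ (l - 1) * d σ) := by
    intro σ
    have : w σ ^ l = w σ * w σ ^ (l - 1) := by
      nth_rewrite 1 [show l = 1 + (l - 1) by ring]
      rw [Real.rpow_add (hwpos σ), Real.rpow_one]
    rw [this]; ring
  set A := ∑ σ ∈ s, (w σ * a σ) ^ 2 with hA_def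
  set B := ∑ σ ∈ s, (w σ ^ (l - 1) * d σ) ^ 2 with hB_def
  have hCS : T ^ 2 ≤ A * B := by
    rw [hT_def]
    simp_rw [hsplit]
    exact Finset.sum_mul_sq_le_sq_mul_sq s _ _
  have hA : A ≤ K ^ 2 := by
    rw [hA_def]
    calc ∑ σ ∈ s, (w σ * a σ) ^ 2 = ∑ σ ∈ s, w σ ^ 2 * a σ ^ 2 := by
          apply Finset.sum_congr rfl; intro σ _; ring
    _ ≤ K ^ 2 := ha s
  have hl2 : (1:ℝ) ≤ 2 * l + 2 := by linarith
  obtain ⟨hε_pos, hε_sum⟩ := hb (2 * l + 2) hl2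
  have hB : B ≤ ‖u‖ ^ 2 * ε (2 * l + 2) := by
    rw [hB_def]
    have hstep : ∀ σ ∈ s, (w σ ^ (l - 1) * d σ) ^ 2
        ≤ ‖u‖ ^ 2 * (w σ ^ (2 * l + 2) * ‖x σ - y σ‖ ^ 2) := by
      intro σ _
      have hd_le : d σ ≤ ‖u‖ * ‖x σ - y σ‖ := norm_inner_le_norm _ _
      have hpow : (w σ ^ (l - 1)) ^ 2 ≤ w σ ^ (2 * l + 2) := by
        rw [← Real.rpow_natCast (w σ ^ (l - 1)) 2, ← Real.rpow_mul (hwpos σ).le]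
        apply Real.rpow_le_rpow_of_exponent_le (hw σ)
        push_cast; linarith
      have h1 : (w σ ^ (l - 1) * d σ) ^ 2 = (w σ ^ (l - 1)) ^ 2 * d σ ^ 2 := by ring
      have h2 : d σ ^ 2 ≤ ‖u‖ ^ 2 * ‖x σ - y σ‖ ^ 2 := by
        have := mul_le_mul hd_le hd_le (norm_nonneg _) (by positivity)
        nlinarith
      have hd20 : (0:ℝ) ≤ d σ ^ 2 := sq_nonneg _
      have hp0 : (0:ℝ) ≤ (w σ ^ (l - 1)) ^ 2 := sq_nonneg _
      calc (w σ ^ (l - 1) * d σ) ^ 2 = (w σ ^ (l - 1)) ^ 2 * d σ ^ 2 := h1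
      _ ≤ w σ ^ (2 * l + 2) * (‖u‖ ^ 2 * ‖x σ - y σ‖ ^ 2) := by
          apply mul_le_mul hpow h2 hd20 (Real.rpow_pos_of_pos (hwpos σ) _).le
      _ = ‖u‖ ^ 2 * (w σ ^ (2 * l + 2) * ‖x σ - y σ‖ ^ 2) := by ring
    calc ∑ σ ∈ s, (w σ ^ (l - 1) * d σ) ^ 2
        ≤ ∑ σ ∈ s, ‖u‖ ^ 2 * (w σ ^ (2 * l + 2) * ‖x σ - y σ‖ ^ 2) :=
          Finset.sum_le_sum hstep
    _ = ‖u‖ ^ 2 * ∑ σ ∈ s, w σ ^ (2 * l + 2) * ‖x σ - y σ‖ ^ 2 := by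
          rw [Finset.mul_sum]
    _ ≤ ‖u‖ ^ 2 * ε (2 * l + 2) := by
          apply mul_le_mul_of_nonneg_left (hε_sum s) (by positivity)
  have hT0 : 0 ≤ T := by
    rw [hT_def]
    apply Finset.sum_nonneg
    intro σ _
    have := (Real.rpow_pos_of_pos (hwpos σ) l).le
    positivity
  have hT : T ≤ K * (‖u‖ * Real.sqrt (ε (2 * l + 2))) := by
    have h1 : T ^ 2 ≤ K ^ 2 * (‖u‖ ^ 2 * ε (2 * l + 2)) := by
      calc T ^ 2 ≤ A * B := hCS
      _ ≤ K ^ 2 * (‖u‖ ^ 2 * ε (2 * l + 2)) := by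
          have hA0 : 0 ≤ A := Finset.sum_nonneg fun σ _ => sq_nonneg _
          have hB0 : 0 ≤ B := Finset.sum_nonneg fun σ _ => sq_nonneg _
          exact mul_le_mul hA hB hB0 (sq_nonneg K)
    have h2 : (K * (‖u‖ * Real.sqrt (ε (2 * l + 2)))) ^ 2
        = K ^ 2 * (‖u‖ ^ 2 * ε (2 * l + 2)) := by
      rw [mul_pow, mul_pow, Real.sq_sqrt hε_pos.le]
    have h3 : 0 ≤ K * (‖u‖ * Real.sqrt (ε (2 * l + 2))) := by positivity
    nlinarith
  calc ∑ σ ∈ s, w σ ^ l * a σ ^ 2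
      ≤ (∑ σ ∈ s, w σ ^ l * b σ ^ 2) + 2 * T := hsum
  _ ≤ (∑ σ ∈ s, w σ ^ l * b σ ^ 2) + 2 * K * ‖u‖ * Real.sqrt (ε (2 * l + 2)) := by
      have := mul_le_mul_of_nonneg_left hT (by norm_num : (0:ℝ) ≤ 2)
      linarith
end
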